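/- arXiv:1509.03380 — 2 statements merged into one kernel-verified Lean document; each statement's English description precedes it below -/
import Mathlib

section
/- If P is a principal divisor on G and Q is a principal divisor on H, then β(P,Q) is a principal divisor on the triangulated product Δ. -/
open scoped Classical
open Finset

section TriangulatedProduct

variable {VG VH : Type*}

/-- The column of the Laplacian matrix of `G` indexed by the vertex `w`:
its entry at `v` is `-deg v` if `v = w`, `1` if `v` is adjacent to `w`, and `0` otherwise. -/
noncomputable def lapCol (G : SimpleGraph VG) [Fintype VG] (w v : VG) : ℤ :=
  if v = w then -(((Finset.univ.filter (fun u => G.Adj v u)).card : ℤ))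
  else if G.Adj v w then 1 else 0

/-- A divisor on a finite graph is principal if it lies in the ℤ-span of the
columns of the Laplacian matrix of the graph. -/
def GraphPrincipal (G : SimpleGraph VG) [Fintype VG] (D : VG → ℤ) : Prop :=
  ∃ f : VG → ℤ, ∀ v, D v = ∑ w, f w * lapCol G w v

/-- A triangulated product of the graphs `G` and `H`: for each square
(an edge `aa'` of `G` together with an edge `bb'` of `H`) exactly one of the two
possible diagonals `{(a,b),(a',b')}`, `{(a,b'),(a',b)}` is chosen.  The structure
records the resulting symmetric "diagonal edge" relation. -/
structure TriProd (G : SimpleGraph VG) (H : SimpleGraph VH) where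
  diag : VG × VH → VG × VH → Prop
  diag_symm : ∀ u v, diag u v → diag v u
  diag_adj : ∀ a a' b b', diag (a, b) (a', b') → G.Adj a a' ∧ H.Adj b b'
  diag_choice : ∀ a a' b b', G.Adj a a' → H.Adj b b' →
    (diag (a, b) (a', b') ∧ ¬ diag (a, b') (a', b)) ∨
    (¬ diag (a, b) (a', b') ∧ diag (a, b') (a', b))

namespace TriProd

variable {G : SimpleGraph VG} {H : SimpleGraph VH}

/-- `u` and `v` form an edge of the triangulated product: a horizontal edge,
a vertical edge, or a diagonal edge. -/
def Adj (T : TriProd G H) (u v : VG × VH) : Prop :=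
  (u.2 = v.2 ∧ G.Adj u.1 v.1) ∨ (u.1 = v.1 ∧ H.Adj u.2 v.2) ∨ T.diag u v

/-- `{u, v, w}` is a triangle (2-face) of the triangulated product. -/
def IsFace (T : TriProd G H) (u v w : VG × VH) : Prop :=
  ∃ a a' b b', T.diag (a, b) (a', b') ∧
    ({u, v, w} : Finset (VG × VH)) = {(a, b), (a', b'), (a', b)}

/-- `{u, v, w}` is a triangle of the triangulated product whose diagonal edge
does not contain the vertex `x`. -/
def IsFaceAvoiding (T : TriProd G H) (u v w x : VG × VH) : Prop :=
  ∃ a a' b b', T.diag (a, b) (a', b') ∧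
    ({u, v, w} : Finset (VG × VH)) = {(a, b), (a', b'), (a', b)} ∧
    x ≠ (a, b) ∧ x ≠ (a', b')

variable [Fintype VG] [Fintype VH]

/-- The structure constant `α(e, x)` for the edge `e = {u, v}` of the
triangulated product and the vertex `x`. -/
noncomputable def alpha (T : TriProd G H) (u v x : VG × VH) : ℤ :=
  if x = u ∨ x = v then
    (if T.diag u v then 1
     else ((Finset.univ.filter (fun w => T.IsFaceAvoiding u v w x)).card : ℤ))
  else 0

/-- The divisor of the function `φ`, evaluated at the edge `{u, v}` of the
triangulated product: the sum of `φ` over the third vertices of the triangles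
containing `{u, v}`, minus `α({u,v},u) φ(u) + α({u,v},v) φ(v)`. -/
noncomputable def Div (T : TriProd G H) (φ : VG × VH → ℤ) (u v : VG × VH) : ℤ :=
  (∑ w ∈ Finset.univ.filter (fun w => T.IsFace u v w), φ w)
    - (T.alpha u v u * φ u + T.alpha u v v * φ v)

/-- A divisor on the triangulated product (a function on edges, encoded as a
function on ordered pairs of vertices) is principal if it agrees with `Div φ`
on every edge, for some `φ`. -/
def Principal (T : TriProd G H) (D : VG × VH → VG × VH → ℤ) : Prop :=
  ∃ φ : VG × VH → ℤ, ∀ u v, T.Adj u v → D u v = T.Div φ u v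

/-- A divisor on the triangulated product is Cartier if near every vertex `x`
it agrees with a principal divisor on all edges containing `x`. -/
def Cartier (T : TriProd G H) (D : VG × VH → VG × VH → ℤ) : Prop :=
  ∀ x : VG × VH, ∃ φ : VG × VH → ℤ,
    ∀ u v, T.Adj u v → (x = u ∨ x = v) → D u v = T.Div φ u v

/-- A divisor is ℚ-Cartier if some nonzero integer multiple of it is Cartier. -/
def QCartier (T : TriProd G H) (D : VG × VH → VG × VH → ℤ) : Prop :=
  ∃ m : ℤ, m ≠ 0 ∧ T.Cartier (fun u v => m * D u v)

/-- The balancing conditions for a divisor `D` on the triangulated product. -/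
def Balanced (T : TriProd G H) (D : VG × VH → VG × VH → ℤ) : Prop :=
  ∀ a : VG, ∀ b : VH,
    (∀ x x' : VG, G.Adj a x → G.Adj a x' →
      (∑ c ∈ Finset.univ.filter (fun c : VH => T.Adj (a, b) (x, c)), D (a, b) (x, c)) =
      (∑ c ∈ Finset.univ.filter (fun c : VH => T.Adj (a, b) (x', c)), D (a, b) (x', c))) ∧
    (∀ y y' : VH, H.Adj b y → H.Adj b y' →
      (∑ c ∈ Finset.univ.filter (fun c : VG => T.Adj (a, b) (c, y)), D (a, b) (c, y)) =
      (∑ c ∈ Finset.univ.filter (fun c : VG => T.Adj (a, b) (c, y')), D (a, b) (c, y')))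

end TriProd

/-- The map `β` sending a pair of divisors on `G` and `H` to a divisor on the
triangulated product: `C(a)` on vertical edges `{(a,b),(a,b')}`, `D(b)` on
horizontal edges `{(a,b),(a',b)}`, and `0` on diagonal edges. -/
noncomputable def beta (C : VG → ℤ) (D : VH → ℤ) (u v : VG × VH) : ℤ :=
  if u.1 = v.1 then C u.1 else if u.2 = v.2 then D u.2 else 0

end TriangulatedProduct

/-! If `P` and `Q` are the Laplacian images of `f` and `g`, then `φ (a, b) = f a + g b` has
divisor `β(P, Q)`. Each neighbour `y` of `b` gives exactly one triangle on the horizontal edge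
`{(a, b), (a', b)}`; its third vertex shares its first coordinate with the endpoint off its
diagonal, so it contributes `g y - g b`, and these sum to the Laplacian of `g` at `b`. Vertical
edges are the same computation in the transposed product `T.swap`, and on a diagonal edge the
four values of `φ` around the square cancel. -/

namespace TriProd
variable {VG VH : Type*} {G : SimpleGraph VG} {H : SimpleGraph VH}

lemma isFace_comm (T : TriProd G H) (u v : VG × VH) : T.IsFace u v = T.IsFace v u := by
  ext w
  simp only [IsFace, Finset.insert_comm u v]

lemma isFaceAvoiding_comm (T : TriProd G H) (u v : VG × VH) :
    T.IsFaceAvoiding u v = T.IsFaceAvoiding v u := by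
  ext w x
  simp only [IsFaceAvoiding, Finset.insert_comm u v]

lemma eq_of_triangle_eq_horiz (T : TriProd G H) {a a' x x' : VG} {b y y' : VH} {w : VG × VH}
    (ha : a ≠ a') (hd : T.diag (x, y) (x', y'))
    (hset : ({(a, b), (a', b), w} : Finset (VG × VH)) = {(x, y), (x', y'), (x', y)}) :
    y = b ∧ w = (x', y') ∧ (x = a ∧ x' = a' ∨ x = a' ∧ x' = a) := by
  have hy := (T.diag_adj _ _ _ _ hd).2.ne
  have h1 : (a, b) ∈ ({(x, y), (x', y'), (x', y)} : Finset (VG × VH)) := hset ▸ by simp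
  have h2 : (a', b) ∈ ({(x, y), (x', y'), (x', y)} : Finset (VG × VH)) := hset ▸ by simp
  have h3 : (x', y') ∈ ({(a, b), (a', b), w} : Finset (VG × VH)) := hset ▸ by simp
  simp only [Finset.mem_insert, Finset.mem_singleton, Prod.mk.injEq] at h1 h2 h3
  grind

lemma eq_of_triangle_eq_diag (T : TriProd G H) {a a' x x' : VG} {b b' y y' : VH} {w : VG × VH}
    (ha : a ≠ a') (hb : b ≠ b') (hd : T.diag (x, y) (x', y'))
    (hset : ({(a, b), (a', b'), w} : Finset (VG × VH)) = {(x, y), (x', y'), (x', y)}) :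
    w = (x', y) ∧
      (x = a ∧ y = b ∧ x' = a' ∧ y' = b' ∨ x = a' ∧ y = b' ∧ x' = a ∧ y' = b) := by
  have hx := (T.diag_adj _ _ _ _ hd).1.ne
  have hy := (T.diag_adj _ _ _ _ hd).2.ne
  have h1 : (a, b) ∈ ({(x, y), (x', y'), (x', y)} : Finset (VG × VH)) := hset ▸ by simp
  have h2 : (a', b') ∈ ({(x, y), (x', y'), (x', y)} : Finset (VG × VH)) := hset ▸ by simp
  have h3 : (x', y) ∈ ({(a, b), (a', b'), w} : Finset (VG × VH)) := hset ▸ by simp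
  simp only [Finset.mem_insert, Finset.mem_singleton, Prod.mk.injEq] at h1 h2 h3
  grind

lemma isFace_horiz_iff (T : TriProd G H) {a a' : VG} (ha : a ≠ a') (b : VH) (w : VG × VH) :
    T.IsFace (a, b) (a', b) w ↔
      (∃ y, T.diag (a, b) (a', y) ∧ w = (a', y)) ∨
      (∃ y, T.diag (a', b) (a, y) ∧ w = (a, y)) := by
  constructor
  · rintro ⟨x, x', y, y', hd, hset⟩
    obtain ⟨rfl, rfl, ⟨rfl, rfl⟩ | ⟨rfl, rfl⟩⟩ := T.eq_of_triangle_eq_horiz ha hd hset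
    exacts [Or.inl ⟨y', hd, rfl⟩, Or.inr ⟨y', hd, rfl⟩]
  · rintro (⟨y, hd, rfl⟩ | ⟨y, hd, rfl⟩)
    · exact ⟨a, a', b, y, hd, by grind⟩
    · exact ⟨a', a, b, y, hd, by grind⟩

lemma isFaceAvoiding_horiz_iff (T : TriProd G H) {a a' : VG} (ha : a ≠ a') (b : VH)
    (w : VG × VH) :
    T.IsFaceAvoiding (a, b) (a', b) w (a', b) ↔ ∃ y, T.diag (a, b) (a', y) ∧ w = (a', y) := by
  constructor
  · rintro ⟨x, x', y, y', hd, hset, hx, hx'⟩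
    obtain ⟨rfl, rfl, ⟨rfl, rfl⟩ | ⟨rfl, rfl⟩⟩ := T.eq_of_triangle_eq_horiz ha hd hset
    exacts [⟨y', hd, rfl⟩, absurd rfl hx]
  · rintro ⟨y, hd, rfl⟩
    have hy := (T.diag_adj _ _ _ _ hd).2.ne
    exact ⟨a, a', b, y, hd, by grind, by grind, by grind⟩

lemma isFace_diag_iff (T : TriProd G H) {a a' : VG} {b b' : VH} (hd : T.diag (a, b) (a', b'))
    (w : VG × VH) : T.IsFace (a, b) (a', b') w ↔ w = (a', b) ∨ w = (a, b') := by
  obtain ⟨ha, hb⟩ := T.diag_adj _ _ _ _ hd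
  constructor
  · rintro ⟨x, x', y, y', hd', hset⟩
    obtain ⟨rfl, ⟨rfl, rfl, rfl, rfl⟩ | ⟨rfl, rfl, rfl, rfl⟩⟩ :=
      T.eq_of_triangle_eq_diag ha.ne hb.ne hd' hset
    exacts [Or.inl rfl, Or.inr rfl]
  · rintro (rfl | rfl)
    · exact ⟨a, a', b, b', hd, by grind⟩
    · exact ⟨a', a, b', b, T.diag_symm _ _ hd, by grind⟩

def swap (T : TriProd G H) : TriProd H G where
  diag u v := T.diag u.swap v.swap
  diag_symm _ _ h := T.diag_symm _ _ h
  diag_adj _ _ _ _ h := (T.diag_adj _ _ _ _ h).symm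
  diag_choice b b' a a' hb ha := by
    rcases T.diag_choice a a' b b' ha hb with ⟨h, hn⟩ | ⟨hn, h⟩
    · exact Or.inl ⟨h, fun h' => hn (T.diag_symm _ _ h')⟩
    · exact Or.inr ⟨fun h' => hn h', T.diag_symm _ _ h⟩

lemma isFace_swap (T : TriProd G H) (u v w : VG × VH) :
    T.swap.IsFace u.swap v.swap w.swap ↔ T.IsFace u v w := by
  -- the transposed triangle has the right shape when read from the other end of its diagonal
  constructor <;>
  · rintro ⟨p, p', q, q', hd, hset⟩
    refine ⟨q', q, p', p, T.diag_symm _ _ hd, Finset.ext fun z => ?_⟩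
    have := Finset.ext_iff.1 hset z.swap
    simp only [Finset.mem_insert, Finset.mem_singleton] at this ⊢
    grind

lemma isFaceAvoiding_swap (T : TriProd G H) (u v w x : VG × VH) :
    T.swap.IsFaceAvoiding u.swap v.swap w.swap x.swap ↔ T.IsFaceAvoiding u v w x := by
  constructor <;>
  · rintro ⟨p, p', q, q', hd, hset, hx, hx'⟩
    refine ⟨q', q, p', p, T.diag_symm _ _ hd, Finset.ext fun z => ?_, ?_, ?_⟩
    · have := Finset.ext_iff.1 hset z.swap
      simp only [Finset.mem_insert, Finset.mem_singleton] at this ⊢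
      grind
    all_goals grind

variable [Fintype VG] [Fintype VH]

lemma alpha_comm (T : TriProd G H) (u v x : VG × VH) : T.alpha u v x = T.alpha v u x := by
  simp only [alpha, T.isFaceAvoiding_comm u v, or_comm (a := x = u),
    show T.diag u v ↔ T.diag v u from ⟨T.diag_symm _ _, T.diag_symm _ _⟩]

lemma alpha_horiz (T : TriProd G H) {a a' : VG} (ha : a ≠ a') (b : VH) :
    T.alpha (a, b) (a', b) (a', b) = #{y | T.diag (a, b) (a', y)} := by
  have hnd : ¬ T.diag (a, b) (a', b) := fun h => (T.diag_adj _ _ _ _ h).2.ne rfl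
  have hfilter : ({w | T.IsFaceAvoiding (a, b) (a', b) w (a', b)} : Finset _) =
      Finset.image (fun y => (a', y)) {y | T.diag (a, b) (a', y)} := by
    ext w
    simp [T.isFaceAvoiding_horiz_iff ha, eq_comm]
  rw [alpha, if_pos (Or.inr rfl), if_neg hnd, hfilter,
    Finset.card_image_of_injective _ (Prod.mk_right_injective a')]

lemma div_horiz (T : TriProd G H) (φ : VG × VH → ℤ) {a a' : VG} (ha : a ≠ a') (b : VH) :
    T.Div φ (a, b) (a', b) =
      ∑ y with T.diag (a, b) (a', y), (φ (a', y) - φ (a', b)) +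
      ∑ y with T.diag (a', b) (a, y), (φ (a, y) - φ (a, b)) := by
  have hfaces : ({w | T.IsFace (a, b) (a', b) w} : Finset _) =
      Finset.image (fun y => (a', y)) {y | T.diag (a, b) (a', y)} ∪
      Finset.image (fun y => (a, y)) {y | T.diag (a', b) (a, y)} := by
    ext w
    simp [T.isFace_horiz_iff ha, eq_comm]
  have hdisj : Disjoint (Finset.image (fun y => (a', y)) {y | T.diag (a, b) (a', y)})
      (Finset.image (fun y => (a, y)) {y | T.diag (a', b) (a, y)}) := by
    simp [Finset.disjoint_left, ha]
  have hα : T.alpha (a, b) (a', b) (a, b) = #{y | T.diag (a', b) (a, y)} := by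
    rw [alpha_comm, T.alpha_horiz ha.symm]
  rw [Div, hfaces, Finset.sum_union hdisj, Finset.sum_image (Prod.mk_right_injective a').injOn,
    Finset.sum_image (Prod.mk_right_injective a).injOn, hα, T.alpha_horiz ha,
    Finset.sum_sub_distrib, Finset.sum_sub_distrib]
  simp only [Finset.sum_const, nsmul_eq_mul]
  ring

lemma div_diag (T : TriProd G H) (φ : VG × VH → ℤ) {a a' : VG} {b b' : VH}
    (hd : T.diag (a, b) (a', b')) :
    T.Div φ (a, b) (a', b') = φ (a', b) + φ (a, b') - φ (a, b) - φ (a', b') := by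
  have ha : a' ≠ a := (T.diag_adj _ _ _ _ hd).1.ne'
  have hfaces : ({w | T.IsFace (a, b) (a', b') w} : Finset _) = {(a', b), (a, b')} := by
    ext w
    simp [T.isFace_diag_iff hd]
  rw [Div, hfaces, Finset.sum_pair (by simp [ha]), alpha, alpha, if_pos (Or.inl rfl),
    if_pos (Or.inr rfl), if_pos hd, if_pos hd]
  ring

lemma div_add_horiz (T : TriProd G H) (f : VG → ℤ) (g : VH → ℤ) {a a' : VG}
    (ha : G.Adj a a') (b : VH) :
    T.Div (fun p => f p.1 + g p.2) (a, b) (a', b) = ∑ y with H.Adj b y, (g y - g b) := by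
  have hunion : ({y | T.diag (a, b) (a', y)} : Finset VH) ∪
      ({y | T.diag (a', b) (a, y)} : Finset VH) = ({y | H.Adj b y} : Finset VH) := by
    ext y
    simp only [Finset.mem_union, Finset.mem_filter, Finset.mem_univ, true_and]
    refine ⟨fun h => h.elim (fun h => (T.diag_adj _ _ _ _ h).2)
      (fun h => (T.diag_adj _ _ _ _ h).2), fun hy => ?_⟩
    rcases T.diag_choice a a' b y ha hy with ⟨h, -⟩ | ⟨-, h⟩
    exacts [Or.inl h, Or.inr (T.diag_symm _ _ h)]
  have hdisj : Disjoint ({y | T.diag (a, b) (a', y)} : Finset VH)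
      ({y | T.diag (a', b) (a, y)} : Finset VH) := by
    refine Finset.disjoint_filter.2 fun y _ h h' => ?_
    rcases T.diag_choice a a' b y ha (T.diag_adj _ _ _ _ h).2 with ⟨-, hn⟩ | ⟨hn, -⟩
    exacts [hn (T.diag_symm _ _ h'), hn h]
  rw [T.div_horiz _ ha.ne, ← hunion, Finset.sum_union hdisj]
  simp only [add_sub_add_left_eq_sub]

lemma alpha_swap (T : TriProd G H) (u v x : VG × VH) :
    T.swap.alpha u.swap v.swap x.swap = T.alpha u v x := by
  have hcard : #{w | T.swap.IsFaceAvoiding u.swap v.swap w x.swap} =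
      #{w | T.IsFaceAvoiding u v w x} :=
    Finset.card_equiv (Equiv.prodComm _ _) (by simp [← T.isFaceAvoiding_swap u v _ x])
  simp only [alpha, hcard, Prod.swap_inj]
  rfl

lemma div_swap (T : TriProd G H) (φ : VG × VH → ℤ) (u v : VG × VH) :
    T.swap.Div (φ ∘ Prod.swap) u.swap v.swap = T.Div φ u v := by
  have hsum :
      ∑ w with T.swap.IsFace u.swap v.swap w, φ w.swap = ∑ w with T.IsFace u v w, φ w :=
    Finset.sum_equiv (Equiv.prodComm _ _) (by simp [← T.isFace_swap u v]) (by simp)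
  simp only [Div, Function.comp_apply, hsum, alpha_swap, Prod.swap_swap]

lemma div_add_vert (T : TriProd G H) (f : VG → ℤ) (g : VH → ℤ) (a : VG) {b b' : VH}
    (hb : H.Adj b b') :
    T.Div (fun p => f p.1 + g p.2) (a, b) (a, b') = ∑ x with G.Adj a x, (f x - f a) := by
  have hφ : (fun p : VG × VH => f p.1 + g p.2) =
      (fun q : VH × VG => g q.1 + f q.2) ∘ Prod.swap := by
    ext p
    exact add_comm _ _
  rw [hφ, ← div_swap]
  exact T.swap.div_add_horiz g f hb a

lemma div_add_diag (T : TriProd G H) (f : VG → ℤ) (g : VH → ℤ) {a a' : VG} {b b' : VH}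
    (hd : T.diag (a, b) (a', b')) : T.Div (fun p => f p.1 + g p.2) (a, b) (a', b') = 0 := by
  rw [T.div_diag _ hd]
  ring

end TriProd

lemma sum_mul_lapCol {V : Type*} [Fintype V] (G : SimpleGraph V) (f : V → ℤ) (v : V) :
    ∑ w, f w * lapCol G w v = ∑ w with G.Adj v w, (f w - f v) := by
  have hcol : ∀ w, lapCol G w v =
      (if G.Adj v w then 1 else 0) - if w = v then #{u | G.Adj v u} else 0 := by
    intro w
    by_cases hw : w = v
    · subst hw; simp [lapCol]
    · simp [lapCol, hw, Ne.symm hw]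
  simp [hcol, mul_sub, Finset.sum_sub_distrib, Finset.sum_ite, mul_comm]

theorem beta_principal_general {VG VH : Type*} [Fintype VG] [Fintype VH]
    (G : SimpleGraph VG) (H : SimpleGraph VH)
    (T : TriProd G H)
    (P : VG → ℤ) (Q : VH → ℤ)
    (hP : GraphPrincipal G P) (hQ : GraphPrincipal H Q) :
    T.Principal (beta P Q) := by
  obtain ⟨f, hf⟩ := hP
  obtain ⟨g, hg⟩ := hQ
  refine ⟨fun p => f p.1 + g p.2, ?_⟩
  rintro ⟨a, b⟩ ⟨a', b'⟩ (⟨rfl, ha : G.Adj a a'⟩ | ⟨rfl, hb⟩ | hd)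
  · rw [T.div_add_horiz f g ha, beta, if_neg ha.ne, if_pos rfl, hg, sum_mul_lapCol]
  · rw [T.div_add_vert f g a hb, beta, if_pos rfl, hf, sum_mul_lapCol]
  · obtain ⟨ha, hb⟩ := T.diag_adj _ _ _ _ hd
    rw [T.div_add_diag f g hd, beta, if_neg ha.ne, if_neg hb.ne]

/-- If `P` is a principal divisor on `G` and `Q` is a principal divisor
on `H`, then `β(P, Q)` is a principal divisor on the triangulated product `Δ`. -/
theorem beta_principal {VG VH : Type*} [Fintype VG] [Fintype VH]
    (G : SimpleGraph VG) (H : SimpleGraph VH)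
    (hG : G.Connected) (hH : H.Connected)
    (hGe : ∃ a a', G.Adj a a') (hHe : ∃ b b', H.Adj b b')
    (T : TriProd G H)
    (P : VG → ℤ) (Q : VH → ℤ)
    (hP : GraphPrincipal G P) (hQ : GraphPrincipal H Q) :
    T.Principal (beta P Q) :=
  beta_principal_general G H T P Q hP hQ
end

section
/- For every vertex v of H, the divisor Σ_{w∈V(G)} Div(1_{(w,v)}) on Δ (where 1_{(w,v)}: V(G)×V(H)→ℤ is the indicator function of the vertex (w,v)) equals β(0, L_v), where L_v: V(H)→ℤ is the divisor on H given by L_v(v) = −deg_H(v), L_v(v') = 1 for every neighbor v' of v in H, and L_v(v') = 0 otherwise. -/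
open scoped Classical
open Finset

/-!
Summing the indicators `1_{(x,v)}` over `x` gives `ψ ∘ Prod.snd` with `ψ = 1_v`, and `Div` is
linear, so it suffices to compute `Div (ψ ∘ Prod.snd)` for an arbitrary `ψ : VH → ℤ`.
Each triangle through an edge `e` has exactly one diagonal edge; if `e = {u, w}` is not diagonal,
that diagonal contains exactly one of `u`, `w`. So the triangles through `e` split into those
avoiding `u` (there are `α(e, u)` of them) and those avoiding `w`, and
`Div φ e = Σ_{t avoids u} (φ t - φ u) + Σ_{t avoids w} (φ t - φ w)`.
On a vertical edge the third vertex of a triangle avoiding `u` lies on the level of `u`, so every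
term vanishes; on a diagonal edge the two third vertices lie on the levels of its endpoints; on a
horizontal edge over `b` each square contributes exactly one triangle, so the third vertices are
in bijection with the neighbours of `b`, which yields the Laplacian of `H` at `b`.
-/

theorem lapCol_eq_sum_adj {VH : Type*} [Fintype VH] (H : SimpleGraph VH) (v b : VH) :
    lapCol H v b =
      ∑ d ∈ univ.filter (H.Adj b), ((if d = v then 1 else 0) - if b = v then 1 else 0) := by
  rw [sum_sub_distrib, sum_ite_eq', sum_const]
  by_cases hb : b = v
  · subst hb
    simp [lapCol]
  · simp [lapCol, hb]

namespace TriProd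

variable {VG VH : Type*} {G : SimpleGraph VG} {H : SimpleGraph VH} (T : TriProd G H)

/-- The possible third vertices of a triangle whose diagonal edge is `{p, q}`. -/
def IsCrossCorner (p q r : VG × VH) : Prop :=
  r = (q.1, p.2) ∨ r = (p.1, q.2)

theorem diag_comm {p q : VG × VH} : T.diag p q ↔ T.diag q p :=
  ⟨T.diag_symm p q, T.diag_symm q p⟩

theorem fst_ne_of_diag {p q : VG × VH} (h : T.diag p q) : p.1 ≠ q.1 :=
  (T.diag_adj p.1 q.1 p.2 q.2 h).1.ne

theorem snd_ne_of_diag {p q : VG × VH} (h : T.diag p q) : p.2 ≠ q.2 :=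
  (T.diag_adj p.1 q.1 p.2 q.2 h).2.ne

theorem exists_triangle_iff {u w t : VG × VH} (P : VG × VH → VG × VH → Prop)
    (hP : ∀ p q, P p q → P q p) :
    (∃ a a' b b', T.diag (a, b) (a', b') ∧
      ({u, w, t} : Finset (VG × VH)) = {(a, b), (a', b'), (a', b)} ∧ P (a, b) (a', b')) ↔
    (T.diag u w ∧ IsCrossCorner u w t ∧ P u w) ∨ (T.diag u t ∧ IsCrossCorner u t w ∧ P u t) ∨
      (T.diag w t ∧ IsCrossCorner w t u ∧ P w t) := by
  constructor
  · rintro ⟨a, a', b, b', hd, hset, hPab⟩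
    have ha := T.fst_ne_of_diag hd
    have hb := T.snd_ne_of_diag hd
    have mem := fun x => Finset.ext_iff.mp hset x
    simp only [mem_insert, mem_singleton] at mem
    have hu := (mem u).mp (by simp)
    have hw := (mem w).mp (by simp)
    have ht := (mem t).mp (by simp)
    have hp := (mem (a, b)).mpr (by simp)
    have hq := (mem (a', b')).mpr (by simp)
    have hr := (mem (a', b)).mpr (by simp)
    have hPba := hP _ _ hPab
    have hdba := T.diag_symm _ _ hd
    -- `hp`, `hq`, `hr` rule out every assignment of corners to `u, w, t` that is not a bijection
    rcases hu with rfl | rfl | rfl <;> rcases hw with rfl | rfl | rfl <;>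
      rcases ht with rfl | rfl | rfl <;>
      simp_all [IsCrossCorner, Prod.ext_iff, eq_comm]
  · rintro (⟨hd, rfl | rfl, hPuw⟩ | ⟨hd, rfl | rfl, hPut⟩ | ⟨hd, rfl | rfl, hPwt⟩)
    · exact ⟨u.1, w.1, u.2, w.2, hd, rfl, hPuw⟩
    · exact ⟨w.1, u.1, w.2, u.2, T.diag_symm _ _ hd,
        by ext; simp only [mem_insert, mem_singleton, Prod.mk.eta]; tauto, hP _ _ hPuw⟩
    · exact ⟨u.1, t.1, u.2, t.2, hd,
        by ext; simp only [mem_insert, mem_singleton, Prod.mk.eta]; tauto, hPut⟩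
    · exact ⟨t.1, u.1, t.2, u.2, T.diag_symm _ _ hd,
        by ext; simp only [mem_insert, mem_singleton, Prod.mk.eta]; tauto, hP _ _ hPut⟩
    · exact ⟨w.1, t.1, w.2, t.2, hd,
        by ext; simp only [mem_insert, mem_singleton, Prod.mk.eta]; tauto, hPwt⟩
    · exact ⟨t.1, w.1, t.2, w.2, T.diag_symm _ _ hd,
        by ext; simp only [mem_insert, mem_singleton, Prod.mk.eta]; tauto, hP _ _ hPwt⟩

theorem isFace_iff {u w t : VG × VH} :
    T.IsFace u w t ↔ (T.diag u w ∧ IsCrossCorner u w t) ∨ (T.diag u t ∧ IsCrossCorner u t w) ∨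
      (T.diag w t ∧ IsCrossCorner w t u) := by
  simpa [IsFace] using T.exists_triangle_iff (u := u) (w := w) (t := t) (fun _ _ => True)
    (fun _ _ h => h)

theorem isFaceAvoiding_iff {u w t x : VG × VH} :
    T.IsFaceAvoiding u w t x ↔
      (T.diag u w ∧ IsCrossCorner u w t ∧ x ≠ u ∧ x ≠ w) ∨
      (T.diag u t ∧ IsCrossCorner u t w ∧ x ≠ u ∧ x ≠ t) ∨
      (T.diag w t ∧ IsCrossCorner w t u ∧ x ≠ w ∧ x ≠ t) :=
  T.exists_triangle_iff (fun p q => x ≠ p ∧ x ≠ q) (fun _ _ h => h.symm)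

theorem ne_of_isCrossCorner {p q r : VG × VH} (hd : T.diag p q) (hr : IsCrossCorner p q r) :
    r ≠ p ∧ r ≠ q := by
  have := T.fst_ne_of_diag hd
  have := T.snd_ne_of_diag hd
  rcases hr with rfl | rfl <;> simp_all [Prod.ext_iff, eq_comm]

theorem isFaceAvoiding_left_iff {u w t : VG × VH} (h : ¬ T.diag u w) :
    T.IsFaceAvoiding u w t u ↔ T.diag w t ∧ IsCrossCorner w t u := by
  rw [isFaceAvoiding_iff]
  constructor
  · rintro (⟨hd, -⟩ | ⟨-, -, hu, -⟩ | ⟨hd, hr, -⟩)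
    exacts [absurd hd h, absurd rfl hu, ⟨hd, hr⟩]
  · exact fun ⟨hd, hr⟩ => Or.inr (Or.inr ⟨hd, hr, T.ne_of_isCrossCorner hd hr⟩)

theorem isFaceAvoiding_right_iff {u w t : VG × VH} (h : ¬ T.diag u w) :
    T.IsFaceAvoiding u w t w ↔ T.diag u t ∧ IsCrossCorner u t w := by
  rw [isFaceAvoiding_iff]
  constructor
  · rintro (⟨hd, -⟩ | ⟨hd, hr, -⟩ | ⟨-, -, hw, -⟩)
    exacts [absurd hd h, ⟨hd, hr⟩, absurd rfl hw]
  · exact fun ⟨hd, hr⟩ => Or.inr (Or.inl ⟨hd, hr, T.ne_of_isCrossCorner hd hr⟩)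

theorem not_isFaceAvoiding_left_and_right {u w t : VG × VH} (h : ¬ T.diag u w) :
    ¬ (T.IsFaceAvoiding u w t u ∧ T.IsFaceAvoiding u w t w) := by
  rw [T.isFaceAvoiding_left_iff h, T.isFaceAvoiding_right_iff h]
  rintro ⟨⟨-, hu | hu⟩, hut, -⟩
  · exact T.fst_ne_of_diag hut (by rw [hu])
  · exact T.snd_ne_of_diag hut (by rw [hu])

theorem isFace_iff_of_not_diag {u w t : VG × VH} (h : ¬ T.diag u w) :
    T.IsFace u w t ↔ T.IsFaceAvoiding u w t u ∨ T.IsFaceAvoiding u w t w := by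
  rw [isFace_iff, T.isFaceAvoiding_left_iff h, T.isFaceAvoiding_right_iff h]
  tauto

theorem isFace_iff_of_diag {u w t : VG × VH} (h : T.diag u w) :
    T.IsFace u w t ↔ IsCrossCorner u w t := by
  have := T.fst_ne_of_diag h
  have := T.snd_ne_of_diag h
  rw [isFace_iff]
  constructor
  · rintro (⟨-, hr⟩ | ⟨-, rfl | rfl⟩ | ⟨-, rfl | rfl⟩) <;> simp_all
  · exact fun hr => Or.inl ⟨h, hr⟩

theorem not_diag_and_diag (a a' : VG) (b d : VH) :
    ¬ (T.diag (a, b) (a', d) ∧ T.diag (a, d) (a', b)) := by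
  rintro ⟨h₁, h₂⟩
  obtain ⟨ha, hb⟩ := T.diag_adj _ _ _ _ h₁
  rcases T.diag_choice a a' b d ha hb with ⟨-, h⟩ | ⟨h, -⟩
  exacts [h h₂, h h₁]

theorem isFace_horizontal_iff {a a' : VG} {b : VH} (ha : a ≠ a') {t : VG × VH} :
    T.IsFace (a, b) (a', b) t ↔ (t.1 = a' ∧ T.diag (a, b) t) ∨ (t.1 = a ∧ T.diag t (a', b)) := by
  have hnd : ¬ T.diag (a, b) (a', b) := fun hd => T.snd_ne_of_diag hd rfl
  simp [isFace_iff, IsCrossCorner, Prod.ext_iff, hnd, ha, eq_comm, and_comm, T.diag_comm (q := t)]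

section Div

variable [Fintype VG] [Fintype VH]

theorem sum_isFace_of_not_diag {M : Type*} [AddCommMonoid M] {u w : VG × VH}
    (h : ¬ T.diag u w) (f : VG × VH → M) :
    ∑ t ∈ univ.filter (fun t => T.IsFace u w t), f t =
      ∑ t ∈ univ.filter (fun t => T.IsFaceAvoiding u w t u), f t +
        ∑ t ∈ univ.filter (fun t => T.IsFaceAvoiding u w t w), f t := by
  rw [← sum_union (disjoint_filter.2 fun t _ hu hw =>
    T.not_isFaceAvoiding_left_and_right h ⟨hu, hw⟩), ← filter_or]
  simp_rw [T.isFace_iff_of_not_diag h]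

theorem div_of_not_diag {u w : VG × VH} (h : ¬ T.diag u w) (φ : VG × VH → ℤ) :
    T.Div φ u w =
      ∑ t ∈ univ.filter (fun t => T.IsFaceAvoiding u w t u), (φ t - φ u) +
        ∑ t ∈ univ.filter (fun t => T.IsFaceAvoiding u w t w), (φ t - φ w) := by
  simp only [Div, alpha, true_or, or_true, if_true, if_neg h, T.sum_isFace_of_not_diag h,
    sum_sub_distrib, sum_const, nsmul_eq_mul]
  ring

theorem div_of_diag {u w : VG × VH} (h : T.diag u w) (φ : VG × VH → ℤ) :
    T.Div φ u w = φ (w.1, u.2) + φ (u.1, w.2) - φ u - φ w := by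
  have hfaces : univ.filter (fun t => T.IsFace u w t) = {(w.1, u.2), (u.1, w.2)} := by
    ext t
    simp [T.isFace_iff_of_diag h, IsCrossCorner]
  have hne : (w.1, u.2) ≠ (u.1, w.2) := fun he => T.fst_ne_of_diag h (Prod.ext_iff.1 he).1.symm
  rw [Div, hfaces, sum_pair hne]
  simp only [alpha, true_or, or_true, if_true, h, one_mul]
  ring

theorem sum_isFace_horizontal {M : Type*} [AddCommMonoid M] {a a' : VG} (ha : G.Adj a a')
    (b : VH) (g : VH → M) :
    ∑ t ∈ univ.filter (fun t => T.IsFace (a, b) (a', b) t), g t.2 =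
      ∑ d ∈ univ.filter (H.Adj b), g d := by
  have hface := fun t => T.isFace_horizontal_iff (b := b) (t := t) ha.ne
  apply sum_nbij Prod.snd
  · intro t ht
    rw [mem_filter, hface] at ht
    rcases ht.2 with ⟨-, hd⟩ | ⟨-, hd⟩
    exacts [mem_filter.2 ⟨mem_univ _, (T.diag_adj _ _ _ _ hd).2⟩,
      mem_filter.2 ⟨mem_univ _, (T.diag_adj _ _ _ _ hd).2.symm⟩]
  · rintro ⟨c, d⟩ ht ⟨c', d'⟩ ht' (rfl : d = d')
    rw [mem_coe, mem_filter, hface] at ht ht'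
    rcases ht.2 with ⟨rfl, h₁⟩ | ⟨rfl, h₁⟩ <;> rcases ht'.2 with ⟨rfl, h₂⟩ | ⟨rfl, h₂⟩
    exacts [rfl, (T.not_diag_and_diag _ _ b d ⟨h₁, h₂⟩).elim,
      (T.not_diag_and_diag _ _ b d ⟨h₂, h₁⟩).elim, rfl]
  · intro d hd
    rcases T.diag_choice a a' b d ha (mem_filter.1 hd).2 with ⟨h₁, -⟩ | ⟨-, h₂⟩
    · exact ⟨(a', d), by simp [hface, h₁], rfl⟩
    · exact ⟨(a, d), by simp [hface, h₂], rfl⟩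
  · exact fun _ _ => rfl

theorem div_comp_snd_of_fst_eq {u w : VG × VH} (hfst : u.1 = w.1) (ψ : VH → ℤ) :
    T.Div (ψ ∘ Prod.snd) u w = 0 := by
  have h : ¬ T.diag u w := fun hd => T.fst_ne_of_diag hd hfst
  have hu : ∀ t, T.IsFaceAvoiding u w t u → t.2 = u.2 := by
    intro t ht
    obtain ⟨hwt, hr | hr⟩ := (T.isFaceAvoiding_left_iff h).1 ht
    · exact (T.fst_ne_of_diag hwt (hfst.symm.trans (Prod.ext_iff.1 hr).1)).elim
    · exact (Prod.ext_iff.1 hr).2.symm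
  have hw : ∀ t, T.IsFaceAvoiding u w t w → t.2 = w.2 := by
    intro t ht
    obtain ⟨hut, hr | hr⟩ := (T.isFaceAvoiding_right_iff h).1 ht
    · exact (T.fst_ne_of_diag hut (hfst.trans (Prod.ext_iff.1 hr).1)).elim
    · exact (Prod.ext_iff.1 hr).2.symm
  rw [T.div_of_not_diag h, sum_eq_zero fun t ht => ?_, sum_eq_zero fun t ht => ?_, add_zero]
  · simp [hw t (mem_filter.1 ht).2]
  · simp [hu t (mem_filter.1 ht).2]

theorem div_comp_snd_of_snd_eq {u w : VG × VH} (hsnd : u.2 = w.2) (ψ : VH → ℤ) :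
    T.Div (ψ ∘ Prod.snd) u w =
      ∑ t ∈ univ.filter (fun t => T.IsFace u w t), (ψ t.2 - ψ u.2) := by
  have h : ¬ T.diag u w := fun hd => T.snd_ne_of_diag hd hsnd
  rw [T.div_of_not_diag h, T.sum_isFace_of_not_diag h]
  simp [hsnd]

theorem div_comp_snd {u w : VG × VH} (huw : T.Adj u w) (ψ : VH → ℤ) :
    T.Div (ψ ∘ Prod.snd) u w =
      beta (fun _ => 0) (fun b => ∑ d ∈ univ.filter (H.Adj b), (ψ d - ψ b)) u w := by
  rcases huw with ⟨hsnd, ha⟩ | ⟨hfst, -⟩ | hd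
  · obtain ⟨a, b⟩ := u
    obtain ⟨a', b'⟩ := w
    dsimp only at hsnd ha
    subst hsnd
    rw [T.div_comp_snd_of_snd_eq (u := (a, b)) (w := (a', b)) rfl,
      T.sum_isFace_horizontal ha b (fun d => ψ d - ψ b)]
    simp [beta, ha.ne]
  · rw [T.div_comp_snd_of_fst_eq hfst]
    simp [beta, hfst]
  · rw [T.div_of_diag hd]
    simp [beta, T.fst_ne_of_diag hd, T.snd_ne_of_diag hd]

theorem sum_div {ι : Type*} (s : Finset ι) (φ : ι → VG × VH → ℤ) (u w : VG × VH) :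
    ∑ i ∈ s, T.Div (φ i) u w = T.Div (fun p => ∑ i ∈ s, φ i p) u w := by
  simp only [Div, sum_sub_distrib, sum_add_distrib, mul_sum]
  rw [sum_comm]

end Div

end TriProd

theorem sum_indicator_div_eq_beta_general {VG VH : Type*} [Fintype VG] [Fintype VH]
    (G : SimpleGraph VG) (H : SimpleGraph VH)
    (T : TriProd G H)
    (v : VH) :
    ∀ u w : VG × VH, T.Adj u w →
      (∑ x : VG, T.Div (fun p => if p = (x, v) then 1 else 0) u w) =
        beta (fun _ => (0 : ℤ)) (lapCol H v) u w := by
  intro u w huw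
  have hlevel : (fun p : VG × VH => ∑ x : VG, if p = (x, v) then (1 : ℤ) else 0) =
      (fun b => if b = v then 1 else 0) ∘ Prod.snd := by
    funext ⟨a, b⟩
    simp [Prod.ext_iff, ite_and]
  rw [T.sum_div, hlevel, T.div_comp_snd huw]
  exact congrArg (beta _ · u w) (funext fun b => (lapCol_eq_sum_adj H v b).symm)

/-- For every vertex `v` of `H`, the divisor
`Σ_{w ∈ V(G)} Div(1_{(w,v)})` on the triangulated product `Δ` equals `β(0, L_v)`,
where `L_v` is the column of the Laplacian matrix of `H` indexed by `v`. -/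
theorem sum_indicator_div_eq_beta {VG VH : Type*} [Fintype VG] [Fintype VH]
    (G : SimpleGraph VG) (H : SimpleGraph VH)
    (hG : G.Connected) (hH : H.Connected)
    (hGe : ∃ a a', G.Adj a a') (hHe : ∃ b b', H.Adj b b')
    (T : TriProd G H)
    (v : VH) :
    ∀ u w : VG × VH, T.Adj u w →
      (∑ x : VG, T.Div (fun p => if p = (x, v) then 1 else 0) u w) =
        beta (fun _ => (0 : ℤ)) (lapCol H v) u w :=
  sum_indicator_div_eq_beta_general G H T v
end
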